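/- arXiv:1904.05687 — 2 statements merged into one kernel-verified Lean document; each statement's English description precedes it below -/
import Mathlib

section
/- Let X = ∂/∂x + (y/2)∂/∂z, Y = ∂/∂y − (x/2)∂/∂z on ℝ³ and a ∈ ℝ. Then the ten functions 1, x, y, z, x², xy, xz, y² + (a/3)x³, yz − (a/24)x⁴, z² + (a/120)x⁵ are linearly independent and each satisfies the system of equations X³u = aY²u, XYXu = 0, YXYu = 0, Y³u = 0. -/
/-!
The span `V` of `1, x, y, z, x², xy, xz, y², yz, z², x³, x⁴, x⁵` is invariant under `X` and `Y`,
which act on coefficient vectors by explicit linear maps. On `V` the operators `XYX`, `YXY` and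
`Y³` vanish identically, and `X³u = aY²u` holds as soon as the coefficients of `x³, x⁴, x⁵` are
tied to those of `y², yz, z²` by three linear relations, which the ten functions satisfy. Linear
independence follows by evaluating a vanishing combination at ten points, first on the plane
`x = 0`, where the `a`-terms disappear.
-/

/-- The vector field `X = ∂/∂x + (y/2)∂/∂z` acting on functions on ℝ³. -/
noncomputable def Xop (f : ℝ × ℝ × ℝ → ℝ) : ℝ × ℝ × ℝ → ℝ :=
  fun p => fderiv ℝ f p (1, 0, 0) + p.2.1 / 2 * fderiv ℝ f p (0, 0, 1)

/-- The vector field `Y = ∂/∂y − (x/2)∂/∂z` acting on functions on ℝ³. -/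
noncomputable def Yop (f : ℝ × ℝ × ℝ → ℝ) : ℝ × ℝ × ℝ → ℝ :=
  fun p => fderiv ℝ f p (0, 1, 0) - p.1 / 2 * fderiv ℝ f p (0, 0, 1)

/-- The ten listed functions. -/
noncomputable def F9 (a : ℝ) : Fin 10 → (ℝ × ℝ × ℝ → ℝ) :=
  ![fun _ => (1 : ℝ),
    fun p => p.1,
    fun p => p.2.1,
    fun p => p.2.2,
    fun p => p.1 ^ 2,
    fun p => p.1 * p.2.1,
    fun p => p.1 * p.2.2,
    fun p => p.2.1 ^ 2 + a / 3 * p.1 ^ 3,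
    fun p => p.2.1 * p.2.2 - a / 24 * p.1 ^ 4,
    fun p => p.2.2 ^ 2 + a / 120 * p.1 ^ 5]

structure PolyCoeffs where
  one : ℝ
  x : ℝ
  y : ℝ
  z : ℝ
  xx : ℝ
  xy : ℝ
  xz : ℝ
  yy : ℝ
  yz : ℝ
  zz : ℝ
  x3 : ℝ
  x4 : ℝ
  x5 : ℝ

namespace PolyCoeffs

def toFun (c : PolyCoeffs) : ℝ × ℝ × ℝ → ℝ := fun p =>
  c.one + c.x * p.1 + c.y * p.2.1 + c.z * p.2.2 + c.xx * p.1 ^ 2 + c.xy * (p.1 * p.2.1)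
    + c.xz * (p.1 * p.2.2) + c.yy * p.2.1 ^ 2 + c.yz * (p.2.1 * p.2.2) + c.zz * p.2.2 ^ 2
    + c.x3 * p.1 ^ 3 + c.x4 * p.1 ^ 4 + c.x5 * p.1 ^ 5

noncomputable def X (c : PolyCoeffs) : PolyCoeffs where
  one := c.x
  x := 2 * c.xx
  y := c.xy + c.z / 2
  z := c.xz
  xx := 3 * c.x3
  xy := c.xz / 2
  xz := 0
  yy := c.yz / 2
  yz := c.zz
  zz := 0
  x3 := 4 * c.x4
  x4 := 5 * c.x5
  x5 := 0

noncomputable def Y (c : PolyCoeffs) : PolyCoeffs where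
  one := c.y
  x := c.xy - c.z / 2
  y := 2 * c.yy
  z := c.yz
  xx := -(c.xz / 2)
  xy := -(c.yz / 2)
  xz := -c.zz
  yy := 0
  yz := 0
  zz := 0
  x3 := 0
  x4 := 0
  x5 := 0

theorem fderiv_toFun_apply (c : PolyCoeffs) (p v : ℝ × ℝ × ℝ) :
    fderiv ℝ c.toFun p v =
      (c.x + 2 * c.xx * p.1 + c.xy * p.2.1 + c.xz * p.2.2 + 3 * c.x3 * p.1 ^ 2
        + 4 * c.x4 * p.1 ^ 3 + 5 * c.x5 * p.1 ^ 4) * v.1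
      + (c.y + c.xy * p.1 + 2 * c.yy * p.2.1 + c.yz * p.2.2) * v.2.1
      + (c.z + c.xz * p.1 + c.yz * p.2.1 + 2 * c.zz * p.2.2) * v.2.2 := by
  unfold toFun
  simp (disch := fun_prop) only [fderiv_fun_add, fderiv_fun_mul, fderiv.fst,
    fderiv_fun_id, ContinuousLinearMap.comp_id, fderiv_fun_const, Pi.zero_apply, smul_zero,
    add_zero, fderiv.snd, fderiv_fun_pow, Nat.add_one_sub_one, pow_one, nsmul_eq_mul,
    Nat.cast_ofNat, smul_add, add_apply, smul_apply, zero_apply, smul_eq_mul,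
    ContinuousLinearMap.comp_apply, ContinuousLinearMap.coe_fst', ContinuousLinearMap.coe_snd']
  ring

theorem Xop_toFun (c : PolyCoeffs) : Xop c.toFun = c.X.toFun := by
  funext p
  simp only [Xop, fderiv_toFun_apply, toFun, X]
  ring

theorem Yop_toFun (c : PolyCoeffs) : Yop c.toFun = c.Y.toFun := by
  funext p
  simp only [Yop, fderiv_toFun_apply, toFun, Y]
  ring

theorem Xop_Yop_Xop_toFun (c : PolyCoeffs) : Xop (Yop (Xop c.toFun)) = 0 := by
  funext p
  simp only [Xop_toFun, Yop_toFun, toFun, X, Y, Pi.zero_apply]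
  ring

theorem Yop_Xop_Yop_toFun (c : PolyCoeffs) : Yop (Xop (Yop c.toFun)) = 0 := by
  funext p
  simp only [Xop_toFun, Yop_toFun, toFun, X, Y, Pi.zero_apply]
  ring

theorem Yop_Yop_Yop_toFun (c : PolyCoeffs) : Yop (Yop (Yop c.toFun)) = 0 := by
  funext p
  simp only [Yop_toFun, toFun, Y, Pi.zero_apply]
  ring

theorem Xop_Xop_Xop_toFun {a : ℝ} {c : PolyCoeffs} (h3 : 3 * c.x3 = a * c.yy)
    (h4 : 24 * c.x4 = -(a * c.yz)) (h5 : 120 * c.x5 = a * c.zz) :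
    Xop (Xop (Xop c.toFun)) = a • Yop (Yop c.toFun) := by
  funext p
  simp only [Xop_toFun, Yop_toFun, toFun, X, Y, Pi.smul_apply, smul_eq_mul]
  linear_combination 2 * h3 + p.1 * h4 + p.1 ^ 2 / 2 * h5

end PolyCoeffs

noncomputable def F9Coeffs (a : ℝ) : Fin 10 → PolyCoeffs :=
  ![⟨1, 0, 0, 0, 0, 0, 0, 0, 0, 0, 0, 0, 0⟩,
    ⟨0, 1, 0, 0, 0, 0, 0, 0, 0, 0, 0, 0, 0⟩,
    ⟨0, 0, 1, 0, 0, 0, 0, 0, 0, 0, 0, 0, 0⟩,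
    ⟨0, 0, 0, 1, 0, 0, 0, 0, 0, 0, 0, 0, 0⟩,
    ⟨0, 0, 0, 0, 1, 0, 0, 0, 0, 0, 0, 0, 0⟩,
    ⟨0, 0, 0, 0, 0, 1, 0, 0, 0, 0, 0, 0, 0⟩,
    ⟨0, 0, 0, 0, 0, 0, 1, 0, 0, 0, 0, 0, 0⟩,
    ⟨0, 0, 0, 0, 0, 0, 0, 1, 0, 0, a / 3, 0, 0⟩,
    ⟨0, 0, 0, 0, 0, 0, 0, 0, 1, 0, 0, -(a / 24), 0⟩,
    ⟨0, 0, 0, 0, 0, 0, 0, 0, 0, 1, 0, 0, a / 120⟩]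

theorem F9_eq_toFun (a : ℝ) (i : Fin 10) : F9 a i = (F9Coeffs a i).toFun := by
  funext p
  fin_cases i <;> simp [F9, F9Coeffs, PolyCoeffs.toFun, ← sub_eq_add_neg]

theorem F9Coeffs_x3_x4_x5 (a : ℝ) (i : Fin 10) :
    3 * (F9Coeffs a i).x3 = a * (F9Coeffs a i).yy ∧
    24 * (F9Coeffs a i).x4 = -(a * (F9Coeffs a i).yz) ∧
    120 * (F9Coeffs a i).x5 = a * (F9Coeffs a i).zz := by
  fin_cases i <;> simp [F9Coeffs] <;> ring

theorem linearIndependent_F9 (a : ℝ) : LinearIndependent ℝ (F9 a) := by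
  rw [Fintype.linearIndependent_iff]
  intro g hg
  have e : ∀ x y z : ℝ, g 0 + g 1 * x + g 2 * y + g 3 * z + g 4 * x ^ 2 + g 5 * (x * y)
      + g 6 * (x * z) + g 7 * (y ^ 2 + a / 3 * x ^ 3) + g 8 * (y * z - a / 24 * x ^ 4)
      + g 9 * (z ^ 2 + a / 120 * x ^ 5) = 0 := fun x y z => by
    simpa [Fin.sum_univ_succ, F9, add_assoc] using congrFun hg (x, y, z)
  have h0 : g 0 = 0 := by simpa using e 0 0 0
  have e1 := e 0 1 0
  have e2 := e 0 (-1) 0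
  have e3 := e 0 0 1
  have e4 := e 0 0 (-1)
  have e5 := e 0 1 1
  norm_num [h0] at e1 e2 e3 e4 e5
  have h2 : g 2 = 0 := by linarith
  have h7 : g 7 = 0 := by linarith
  have h3 : g 3 = 0 := by linarith
  have h9 : g 9 = 0 := by linarith
  have h8 : g 8 = 0 := by linarith
  have e6 := e 1 0 0
  have e7 := e (-1) 0 0
  have e8 := e 1 1 0
  have e9 := e 1 0 1
  norm_num [h0, h2, h3, h7, h8, h9] at e6 e7 e8 e9
  have h1 : g 1 = 0 := by linarith
  have h4 : g 4 = 0 := by linarith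
  have h5 : g 5 = 0 := by linarith
  have h6 : g 6 = 0 := by linarith
  intro i
  fin_cases i <;> assumption

/-- The ten functions are linearly independent and each satisfies the system
`X³u = aY²u`, `XYXu = 0`, `YXYu = 0`, `Y³u = 0`. -/
theorem stmt9 (a : ℝ) :
    LinearIndependent ℝ (F9 a) ∧
    ∀ i : Fin 10, ∀ p : ℝ × ℝ × ℝ,
      Xop (Xop (Xop (F9 a i))) p = a * Yop (Yop (F9 a i)) p ∧
      Xop (Yop (Xop (F9 a i))) p = 0 ∧
      Yop (Xop (Yop (F9 a i))) p = 0 ∧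
      Yop (Yop (Yop (F9 a i))) p = 0 := by
  refine ⟨linearIndependent_F9 a, fun i p => ?_⟩
  obtain ⟨h3, h4, h5⟩ := F9Coeffs_x3_x4_x5 a i
  rw [F9_eq_toFun]
  exact ⟨congrFun (PolyCoeffs.Xop_Xop_Xop_toFun h3 h4 h5) p,
    congrFun (PolyCoeffs.Xop_Yop_Xop_toFun _) p, congrFun (PolyCoeffs.Yop_Xop_Yop_toFun _) p,
    congrFun (PolyCoeffs.Yop_Yop_Yop_toFun _) p⟩
end

section
/- Let g_- = ⊕_{p<0} g_p be a finite-dimensional graded nilpotent Lie algebra and V = ⊕_j V_j a finite-dimensional graded g_-–module (g_p · V_j ⊆ V_{p+j}). For an integer λ, the following are equivalent: (i) for every i > λ, {v ∈ V_i : ξ·v = 0 for all ξ ∈ g_-} = 0; (ii) the dual module V* (with (ξ·α)(v) = −α(ξ·v) and grading (V*)_j = (V_{−j})*) is generated as a g_-–module by ⊕_{j ≥ −λ} (V*)_j, i.e. the smallest subspace of V* containing ⊕_{j ≥ −λ}(V*)_j and closed under the action of g_- is all of V*. -/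
/-!
Direction (i) ⇒ (ii): a `g₋`-stable `W ⊆ V*` containing `(V*)_j` for `j ≥ -λ` has as its
annihilator `U ⊆ V` a `g₋`-stable subspace whose elements have no components in degrees `≤ λ`.
If `U ≠ 0`, the lowest-degree component of an element of `U` is killed by `g₋`, since `g₋` lowers
degrees and `U` has nothing below that degree; this contradicts (i), so `U = 0`, and since `V`
is finite-dimensional, `W = U^⊥ = V*`.
Direction (ii) ⇒ (i): for an invariant `v ∈ V_i` with `i > λ`, the annihilator of `v` in `V*` is
such a `W`, hence everything vanishes on `v`.
-/

open DirectSum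

section Graded

variable {K : Type*} [Field K] {g : Type*} [LieRing g] [LieAlgebra K g]
  {V : Type*} [AddCommGroup V] [LieRingModule g V] {gdeg : ℤ → Submodule K g}

lemma lie_eq_zero_of_forall_homogeneous (hgtop : ⨆ p, gdeg p = ⊤) {v : V}
    (hv : ∀ p, ∀ ξ ∈ gdeg p, ⁅ξ, v⁆ = 0) (ξ : g) : ⁅ξ, v⁆ = 0 :=
  Submodule.iSup_induction gdeg (motive := fun ξ => ⁅ξ, v⁆ = 0) (hgtop ▸ Submodule.mem_top) hv
    (zero_lie v) fun x y hx hy => by rw [add_lie, hx, hy, add_zero]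

variable [Module K V] {Vdeg : ℤ → Submodule K V} [Decomposition Vdeg]

lemma decompose_eq_zero_of_mem_iSup_ne {i : ℤ} {v : V} (hv : v ∈ ⨆ k ∈ {k | k ≠ i}, Vdeg k) :
    (decompose Vdeg v i : V) = 0 := by
  let π := (DirectSum.component K ℤ (fun k => Vdeg k) i) ∘ₗ (decomposeLinearEquiv Vdeg).toLinearMap
  have hle : ⨆ k ∈ {k | k ≠ i}, Vdeg k ≤ LinearMap.ker π :=
    iSup₂_le fun k hk x hx => by
      simpa [π, decomposeLinearEquiv_apply, ← apply_eq_component] using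
        decompose_of_mem_ne Vdeg hx hk
  simpa [π, decomposeLinearEquiv_apply, ← apply_eq_component] using hle hv

lemma decompose_lie_of_mem (hact : ∀ p j : ℤ, ∀ ξ ∈ gdeg p, ∀ v ∈ Vdeg j, ⁅ξ, v⁆ ∈ Vdeg (p + j))
    {p : ℤ} {ξ : g} (hξ : ξ ∈ gdeg p) (v : V) (i : ℤ) :
    (decompose Vdeg ⁅ξ, v⁆ (p + i) : V) = ⁅ξ, (decompose Vdeg v i : V)⁆ := by
  induction v using Decomposition.inductionOn Vdeg with
  | zero => simp
  | @homogeneous k m =>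
    have hξm := hact p k ξ hξ m m.2
    by_cases hk : k = i
    · subst hk
      rw [decompose_of_mem_same Vdeg m.2, decompose_of_mem_same Vdeg hξm]
    · rw [decompose_of_mem_ne Vdeg m.2 hk, decompose_of_mem_ne Vdeg hξm (by omega), lie_zero]
  | add x y hx hy => simp [hx, hy]

lemma exists_lie_eq_zero_of_lie_mem (hgtop : ⨆ p, gdeg p = ⊤) (hgneg : ∀ p : ℤ, 0 ≤ p → gdeg p = ⊥)
    (hact : ∀ p j : ℤ, ∀ ξ ∈ gdeg p, ∀ v ∈ Vdeg j, ⁅ξ, v⁆ ∈ Vdeg (p + j))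
    {lam : ℤ} {U : Submodule K V} (hU : ∀ ξ : g, ∀ u ∈ U, ⁅ξ, u⁆ ∈ U)
    (hlow : ∀ u ∈ U, ∀ i ≤ lam, (decompose Vdeg u i : V) = 0) (hne : U ≠ ⊥) :
    ∃ i, lam < i ∧ ∃ v ∈ Vdeg i, v ≠ 0 ∧ ∀ ξ : g, ⁅ξ, v⁆ = 0 := by
  obtain ⟨u, hu, hu0⟩ := Submodule.exists_mem_ne_zero_of_ne_bot hne
  obtain ⟨d₀, hd₀⟩ : ∃ d, (decompose Vdeg u d : V) ≠ 0 := by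
    by_contra! h
    exact hu0 ((decompose Vdeg).injective (by ext d : 1; simpa using h d))
  have hbdd : ∀ d, (∃ u ∈ U, (decompose Vdeg u d : V) ≠ 0) → lam < d := fun d ⟨u, hu, hd⟩ => by
    by_contra! h
    exact hd (hlow u hu d h)
  obtain ⟨d, ⟨u, hu, hd⟩, hmin⟩ :=
    Int.exists_least_of_bdd ⟨lam + 1, fun z hz => hbdd z hz⟩ ⟨d₀, u, hu, hd₀⟩
  refine ⟨d, hbdd d ⟨u, hu, hd⟩, _, SetLike.coe_mem _, hd,
    lie_eq_zero_of_forall_homogeneous hgtop fun p ξ hξ => ?_⟩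
  rcases le_or_gt 0 p with hp | hp
  · rw [hgneg p hp, Submodule.mem_bot] at hξ
    rw [hξ, zero_lie]
  · rw [← decompose_lie_of_mem hact hξ]
    by_contra hne
    have := hmin (p + d) ⟨_, hU ξ u hu, hne⟩
    omega

lemma decompose_eq_zero_of_mem_dualCoannihilator {W : Submodule K (Module.Dual K V)} {i : ℤ}
    (hW : (⨆ k ∈ {k | k ≠ i}, Vdeg k).dualAnnihilator ≤ W) {u : V}
    (hu : u ∈ W.dualCoannihilator) : (decompose Vdeg u i : V) = 0 :=
  decompose_eq_zero_of_mem_iSup_ne (by simpa using Submodule.dualCoannihilator_anti hW hu)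

omit [LieAlgebra K g] [Decomposition Vdeg] in
lemma lie_mem_dualCoannihilator {Dact : g → Module.Dual K V → Module.Dual K V}
    (hDact : ∀ (ξ : g) (α : Module.Dual K V) (v : V), Dact ξ α v = -α ⁅ξ, v⁆)
    {W : Submodule K (Module.Dual K V)} (hW : ∀ ξ : g, ∀ α ∈ W, Dact ξ α ∈ W) (ξ : g) {u : V}
    (hu : u ∈ W.dualCoannihilator) : ⁅ξ, u⁆ ∈ W.dualCoannihilator := by
  rw [Submodule.mem_dualCoannihilator] at hu ⊢
  intro α hα
  simpa [hDact] using hu _ (hW ξ α hα)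

end Graded

theorem stmt18_general {K : Type*} [Field K]
    {g : Type*} [LieRing g] [LieAlgebra K g]
    {V : Type*} [AddCommGroup V] [Module K V] [LieRingModule g V]
    [FiniteDimensional K V]
    (gdeg : ℤ → Submodule K g) (hg : DirectSum.IsInternal gdeg)
    (hgneg : ∀ p : ℤ, 0 ≤ p → gdeg p = ⊥)
    (Vdeg : ℤ → Submodule K V) (hV : DirectSum.IsInternal Vdeg)
    (hact : ∀ p j : ℤ, ∀ ξ ∈ gdeg p, ∀ v ∈ Vdeg j, ⁅ξ, v⁆ ∈ Vdeg (p + j))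
    (lam : ℤ)
    (Ddeg : ℤ → Submodule K (Module.Dual K V))
    (hD : ∀ j : ℤ, Ddeg j = (⨆ i ∈ {i : ℤ | i ≠ -j}, Vdeg i).dualAnnihilator)
    (Dact : g → Module.Dual K V → Module.Dual K V)
    (hDact : ∀ (ξ : g) (α : Module.Dual K V) (v : V), Dact ξ α v = -α ⁅ξ, v⁆) :
    (∀ i : ℤ, lam < i → ∀ v ∈ Vdeg i, (∀ ξ : g, ⁅ξ, v⁆ = 0) → v = 0) ↔
    (∀ W : Submodule K (Module.Dual K V),
      (∀ j : ℤ, -lam ≤ j → Ddeg j ≤ W) →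
      (∀ (ξ : g), ∀ α ∈ W, Dact ξ α ∈ W) → W = ⊤) := by
  let _ : Decomposition Vdeg := hV.chooseDecomposition
  constructor
  · intro hinv W hWdeg hWact
    have hU : W.dualCoannihilator = ⊥ := by
      by_contra hne
      have hUlow : ∀ u ∈ W.dualCoannihilator, ∀ i ≤ lam, (decompose Vdeg u i : V) = 0 :=
        fun u hu i hi => decompose_eq_zero_of_mem_dualCoannihilator
          (by simpa [hD] using hWdeg (-i) (by omega)) hu
      obtain ⟨i, hi, v, hv, hv0, hvinv⟩ := exists_lie_eq_zero_of_lie_mem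
        hg.submodule_iSup_eq_top hgneg hact (lie_mem_dualCoannihilator hDact hWact) hUlow hne
      exact hv0 (hinv i hi v hv hvinv)
    rw [← Subspace.dualCoannihilator_dualAnnihilator_eq (W := W), hU,
      Submodule.dualAnnihilator_bot]
  · intro hgen i hi v hv hvinv
    have hW : LinearMap.ker (Module.Dual.eval K V v) = ⊤ := by
      refine hgen _ (fun j hj α hα => ?_) (fun ξ α hα => ?_)
      · have hvM : v ∈ ⨆ k ∈ {k : ℤ | k ≠ -j}, Vdeg k :=
          Submodule.mem_iSup_of_mem i (Submodule.mem_iSup_of_mem (show i ≠ -j by omega) hv)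
        rw [hD, Submodule.mem_dualAnnihilator] at hα
        exact hα v hvM
      · simp only [LinearMap.mem_ker, Module.Dual.eval_apply] at hα ⊢
        rw [hDact, hvinv, map_zero, neg_zero]
    rw [← Module.forall_dual_apply_eq_zero_iff K v]
    simpa [Submodule.eq_top_iff'] using hW

/-- For a finite-dimensional graded nilpotent Lie algebra `g₋` (graded in
negative degrees) and a finite-dimensional graded `g₋`-module `V`, the
vanishing of the `g₋`-invariants of `V` in all degrees `i > λ` is equivalent to
the dual module `V*` (with `(ξ·α)(v) = −α(ξ·v)` and `(V*)_j = (V_{−j})*`) being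
generated by `⊕_{j ≥ −λ} (V*)_j`. -/
theorem stmt18 {K : Type*} [Field K]
    {g : Type*} [LieRing g] [LieAlgebra K g] [FiniteDimensional K g]
    {V : Type*} [AddCommGroup V] [Module K V] [LieRingModule g V] [LieModule K g V]
    [FiniteDimensional K V]
    (gdeg : ℤ → Submodule K g) (hg : DirectSum.IsInternal gdeg)
    (hgneg : ∀ p : ℤ, 0 ≤ p → gdeg p = ⊥)
    (hgbr : ∀ p q : ℤ, ∀ x ∈ gdeg p, ∀ y ∈ gdeg q, ⁅x, y⁆ ∈ gdeg (p + q))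
    (Vdeg : ℤ → Submodule K V) (hV : DirectSum.IsInternal Vdeg)
    (hact : ∀ p j : ℤ, ∀ ξ ∈ gdeg p, ∀ v ∈ Vdeg j, ⁅ξ, v⁆ ∈ Vdeg (p + j))
    (lam : ℤ)
    (Ddeg : ℤ → Submodule K (Module.Dual K V))
    (hD : ∀ j : ℤ, Ddeg j = (⨆ i ∈ {i : ℤ | i ≠ -j}, Vdeg i).dualAnnihilator)
    (Dact : g → Module.Dual K V → Module.Dual K V)
    (hDact : ∀ (ξ : g) (α : Module.Dual K V) (v : V), Dact ξ α v = -α ⁅ξ, v⁆) :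
    (∀ i : ℤ, lam < i → ∀ v ∈ Vdeg i, (∀ ξ : g, ⁅ξ, v⁆ = 0) → v = 0) ↔
    (∀ W : Submodule K (Module.Dual K V),
      (∀ j : ℤ, -lam ≤ j → Ddeg j ≤ W) →
      (∀ (ξ : g), ∀ α ∈ W, Dact ξ α ∈ W) → W = ⊤) :=
  stmt18_general gdeg hg hgneg Vdeg hV hact lam Ddeg hD Dact hDact
end
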